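/- arXiv:1102.1162 — 4 statements merged into one kernel-verified Lean document; each statement's English description precedes it below -/
import Mathlib

section
/- Let (Ω, F, P) be a probability space, f : Ω → ℝ a nonnegative integrable function with E[f] > 0, and g : Ω → ℝ measurable with e^g integrable and f·g, f·log f integrable. Then E[f·g] ≤ E[f]·log E[e^g] + E[f·log f] − E[f]·log E[f]. -/
/-!
The function `x ↦ x log x - x` on `[0, ∞)` has convex conjugate `exp`, so pointwise
`x y ≤ x log x - x + exp y` (Fenchel–Young). Integrating this against `f` with `y = g - c`, where
`c = log ∫ e^g - log ∫ f` is chosen so that `∫ e^(g - c) = ∫ f`, makes the linear terms cancel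
and leaves exactly the claimed bound.
-/

open MeasureTheory

namespace Real

theorem mul_le_mul_log_sub_add_exp {x : ℝ} (hx : 0 ≤ x) (y : ℝ) :
    x * y ≤ x * log x - x + exp y := by
  rcases hx.eq_or_lt with rfl | hx
  · simp [(exp_pos y).le]
  have h := log_le_sub_one_of_pos (div_pos (exp_pos y) hx)
  rw [log_div (exp_pos y).ne' hx.ne', log_exp, le_sub_iff_add_le, le_div_iff₀ hx] at h
  linarith

end Real

theorem integral_mul_le_integral_mul_log_sub_add_integral_exp {Ω : Type*} [MeasurableSpace Ω]
    {μ : Measure Ω} {f h : Ω → ℝ} (hf_nonneg : ∀ᵐ ω ∂μ, 0 ≤ f ω) (hf_int : Integrable f μ)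
    (hflf_int : Integrable (fun ω => f ω * Real.log (f ω)) μ)
    (hfh_int : Integrable (fun ω => f ω * h ω) μ)
    (heh_int : Integrable (fun ω => Real.exp (h ω)) μ) :
    ∫ ω, f ω * h ω ∂μ ≤
      ∫ ω, f ω * Real.log (f ω) ∂μ - ∫ ω, f ω ∂μ + ∫ ω, Real.exp (h ω) ∂μ := by
  have hflf_sub_int : Integrable (fun ω => f ω * Real.log (f ω) - f ω) μ := hflf_int.sub hf_int
  calc ∫ ω, f ω * h ω ∂μ
      ≤ ∫ ω, f ω * Real.log (f ω) - f ω + Real.exp (h ω) ∂μ := by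
        refine integral_mono_ae hfh_int (hflf_sub_int.add heh_int) ?_
        filter_upwards [hf_nonneg] with ω hω
        exact Real.mul_le_mul_log_sub_add_exp hω (h ω)
    _ = _ := by rw [integral_add hflf_sub_int heh_int, integral_sub hflf_int hf_int]

theorem entropy_inequality_general
    {Ω : Type*} [MeasurableSpace Ω] (P : Measure Ω)
    (f g : Ω → ℝ)
    (hf_nonneg : ∀ ω, 0 ≤ f ω)
    (hf_int : Integrable f P)
    (hf_pos : 0 < ∫ ω, f ω ∂P)
    (heg_int : Integrable (fun ω => Real.exp (g ω)) P)
    (hfg_int : Integrable (fun ω => f ω * g ω) P)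
    (hflf_int : Integrable (fun ω => f ω * Real.log (f ω)) P) :
    ∫ ω, f ω * g ω ∂P ≤
      (∫ ω, f ω ∂P) * Real.log (∫ ω, Real.exp (g ω) ∂P)
        + ∫ ω, f ω * Real.log (f ω) ∂P
        - (∫ ω, f ω ∂P) * Real.log (∫ ω, f ω ∂P) := by
  set A := ∫ ω, f ω ∂P
  set M := ∫ ω, Real.exp (g ω) ∂P
  have : NeZero P := ⟨by rintro rfl; simp [A] at hf_pos⟩
  have hM : 0 < M := integral_exp_pos heg_int
  set c := Real.log M - Real.log A
  have hexp_shift : ∫ ω, Real.exp (g ω - c) ∂P = A := by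
    simp only [Real.exp_sub]
    rw [integral_div, Real.exp_sub, Real.exp_log hM, Real.exp_log hf_pos]
    exact div_div_cancel₀ hM.ne'
  have hmul_shift : ∫ ω, f ω * (g ω - c) ∂P = ∫ ω, f ω * g ω ∂P - A * c := by
    simp only [mul_sub]
    rw [integral_sub hfg_int (hf_int.mul_const c), integral_mul_const]
  have hbound := integral_mul_le_integral_mul_log_sub_add_integral_exp (h := fun ω => g ω - c)
    (ae_of_all P hf_nonneg) hf_int hflf_int
    (by simp only [mul_sub]; exact hfg_int.sub (hf_int.mul_const c))
    (by simpa only [Real.exp_sub] using heg_int.div_const (Real.exp c))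
  rw [hexp_shift, hmul_shift] at hbound
  linarith

/-- Entropy inequality: `E[f g] ≤ E[f] log E[e^g] + E[f log f] - E[f] log E[f]`. -/
theorem entropy_inequality
    {Ω : Type*} [MeasurableSpace Ω] (P : Measure Ω) [IsProbabilityMeasure P]
    (f g : Ω → ℝ)
    (hf_nonneg : ∀ ω, 0 ≤ f ω)
    (hf_int : Integrable f P)
    (hf_pos : 0 < ∫ ω, f ω ∂P)
    (hg_meas : Measurable g)
    (heg_int : Integrable (fun ω => Real.exp (g ω)) P)
    (hfg_int : Integrable (fun ω => f ω * g ω) P)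
    (hflf_int : Integrable (fun ω => f ω * Real.log (f ω)) P) :
    ∫ ω, f ω * g ω ∂P ≤
      (∫ ω, f ω ∂P) * Real.log (∫ ω, Real.exp (g ω) ∂P)
        + ∫ ω, f ω * Real.log (f ω) ∂P
        - (∫ ω, f ω ∂P) * Real.log (∫ ω, f ω ∂P) :=
  entropy_inequality_general P f g hf_nonneg hf_int hf_pos heg_int hfg_int hflf_int
end

section
/- Let {P_t} be a Markov semigroup on a metric Polish space X satisfying: for some constants α > 0, β ≥ 0, continuous C, C̃ : ℝ≥0 × ℝ≥0 → ℝ>0 and δ : ℝ≥0 → ℝ≥0 with δ(t) → 0, the modified log-Harnack inequality P_t(log f)(y) ≤ log(P_t f)(x) + C(‖x‖,‖y‖)·dist(x,y)^α + δ(t)·C̃(‖x‖,‖y‖)·dist(x,y)^β·‖D log f‖_∞ holds for all bounded differentiable f ≥ 1. Then for every bounded differentiable f, every ε with 0 < ε‖f‖_∞ < 1/2, and all x, y: |P_t f(y) − P_t f(x)| ≤ ε‖f‖²_∞ + C(‖x‖,‖y‖)·dist(x,y)^α/ε + 2 δ(t)·C̃(‖x‖,‖y‖)·dist(x,y)^β·‖Df‖_∞.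 -/
open MeasureTheory Filter

/-!
Apply the log-Harnack inequality to `g = 2 + 2εf`. Since `|εf| ≤ 1/2`, the bound
`log (1 + u) ≥ u - u²` gives `P_t (log g)(y) ≥ log 2 + ε P_t f(y) - ε²‖f‖²_∞`, while
`log (1 + u) ≤ u` gives `log (P_t g)(x) ≤ log 2 + ε P_t f(x)`; moreover
`‖D log g‖_∞ ≤ 2ε‖Df‖_∞` because `g ≥ 1`. Dividing by `ε`, and doing the same for `-f`,
yields the two-sided estimate.
-/

namespace Real

theorem abs_log_one_add_sub_self_le {u : ℝ} (hu : |u| ≤ 1 / 2) : |log (1 + u) - u| ≤ u ^ 2 := by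
  have hpos : 0 ≤ 1 + u := by linarith [neg_abs_le u]
  have hc := Complex.norm_log_one_add_sub_self_le (z := u) (by simp; linarith)
  rw [← Complex.ofReal_one, ← Complex.ofReal_add, ← Complex.ofReal_log hpos,
    ← Complex.ofReal_sub, Complex.norm_real, Complex.norm_real, norm_eq_abs] at hc
  have hinv : (1 - |u|)⁻¹ ≤ 2 := by
    rw [inv_le_comm₀ (by linarith) two_pos]; linarith
  calc |log (1 + u) - u| ≤ |u| ^ 2 * (1 - |u|)⁻¹ / 2 := hc
    _ ≤ |u| ^ 2 * 2 / 2 := by gcongr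
    _ = u ^ 2 := by rw [sq_abs]; ring

end Real

theorem norm_fderiv_log_le_of_one_le {E : Type*} [NormedAddCommGroup E] [NormedSpace ℝ E]
    {g : E → ℝ} {z : E} (hg : DifferentiableAt ℝ g z) (h1 : 1 ≤ g z) :
    ‖fderiv ℝ (fun w => Real.log (g w)) z‖ ≤ ‖fderiv ℝ g z‖ := by
  rw [(hg.hasFDerivAt.log (by positivity)).fderiv, norm_smul]
  refine mul_le_of_le_one_left (norm_nonneg _) ?_
  rw [norm_inv, Real.norm_of_nonneg (by positivity)]
  exact inv_le_one_of_one_le₀ h1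

section TestFunction

variable {X : Type*} [MeasurableSpace X] {f : X → ℝ} {M ε : ℝ}

theorem Measurable.integrable_of_abs_le {μ : Measure X} [IsFiniteMeasure μ] (hf : Measurable f)
    (hM : ∀ z, |f z| ≤ M) : Integrable f μ :=
  .of_bound hf.aestronglyMeasurable M (ae_of_all _ hM)

theorem log_two_add_mul_integral_sub_le_integral_log (ν : Measure X) [IsProbabilityMeasure ν]
    (hf : Measurable f) (hfM : ∀ z, |f z| ≤ M) (hεf : ∀ z, |ε * f z| ≤ 1 / 2) :
    Real.log 2 + ε * ∫ z, f z ∂ν - ε ^ 2 * M ^ 2 ≤ ∫ z, Real.log (2 * (1 + ε * f z)) ∂ν := by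
  have hpos : ∀ z, 0 < 1 + ε * f z := fun z => by linarith [(abs_le.mp (hεf z)).1]
  have hpt : ∀ z, Real.log 2 + ε * f z - ε ^ 2 * M ^ 2 ≤ Real.log (2 * (1 + ε * f z)) := by
    intro z
    have hlog := (abs_le.mp (Real.abs_log_one_add_sub_self_le (hεf z))).1
    have hsq : f z ^ 2 ≤ M ^ 2 := by
      rw [← sq_abs]; exact pow_le_pow_left₀ (abs_nonneg _) (hfM z) 2
    rw [Real.log_mul two_ne_zero (hpos z).ne']
    nlinarith
  have hint : Integrable (fun z => Real.log 2 + ε * f z) ν :=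
    (integrable_const _).add ((hf.integrable_of_abs_le hfM).const_mul ε)
  -- `0 ≤ log (2 (1 + εf)) ≤ 2 (1 + εf) - 1 ≤ 2`
  have hlog : Integrable (fun z => Real.log (2 * (1 + ε * f z))) ν := by
    refine (Real.measurable_log.comp (((hf.const_mul ε).const_add 1).const_mul 2))
      |>.integrable_of_abs_le (M := 2) fun z => ?_
    have h1 : 1 ≤ 2 * (1 + ε * f z) := by linarith [(abs_le.mp (hεf z)).1]
    rw [Function.comp_apply, abs_of_nonneg (Real.log_nonneg h1)]
    linarith [Real.log_le_sub_one_of_pos (one_pos.trans_le h1), (abs_le.mp (hεf z)).2]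
  calc Real.log 2 + ε * ∫ z, f z ∂ν - ε ^ 2 * M ^ 2
      = ∫ z, (Real.log 2 + ε * f z - ε ^ 2 * M ^ 2) ∂ν := by
        rw [integral_sub hint (integrable_const _), integral_add (integrable_const _)
          ((hf.integrable_of_abs_le hfM).const_mul ε), integral_const_mul]
        simp
    _ ≤ ∫ z, Real.log (2 * (1 + ε * f z)) ∂ν :=
        integral_mono (hint.sub (integrable_const _)) hlog hpt

theorem log_integral_two_mul_one_add_le (μ : Measure X) [IsProbabilityMeasure μ]
    (hf : Measurable f) (hfM : ∀ z, |f z| ≤ M) (hε : 0 ≤ ε) (hεM : ε * M ≤ 1 / 2) :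
    Real.log (∫ z, 2 * (1 + ε * f z) ∂μ) ≤ Real.log 2 + ε * ∫ z, f z ∂μ := by
  have hint := hf.integrable_of_abs_le (μ := μ) hfM
  have hmean : |∫ z, f z ∂μ| ≤ M := by
    simpa using norm_integral_le_of_norm_le_const (μ := μ)
      (ae_of_all _ fun z => (Real.norm_eq_abs _).trans_le (hfM z))
  have hpos : 0 < 1 + ε * ∫ z, f z ∂μ := by
    nlinarith [(abs_le.mp hmean).1]
  have hg : ∫ z, 2 * (1 + ε * f z) ∂μ = 2 * (1 + ε * ∫ z, f z ∂μ) := by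
    rw [integral_const_mul, integral_add (integrable_const _) (hint.const_mul ε),
      integral_const_mul]
    simp
  rw [hg, Real.log_mul two_ne_zero hpos.ne']
  linarith [Real.log_le_sub_one_of_pos hpos]

end TestFunction

section

variable {X : Type*} [NormedAddCommGroup X] [NormedSpace ℝ X] [MeasurableSpace X] [BorelSpace X]

/-- With `μ = P_t(x, ·)` and `ν = P_t(y, ·)`, the constants are `K = C(‖x‖,‖y‖) dist(x,y)^α` and
`T = δ(t) C̃(‖x‖,‖y‖) dist(x,y)^β`. -/
def ModifiedLogHarnack (μ ν : Measure X) (K T : ℝ) : Prop :=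
  ∀ (g : X → ℝ) (M L : ℝ), Differentiable ℝ g → (∀ z, 1 ≤ g z) → (∀ z, |g z| ≤ M) →
    (∀ z, ‖fderiv ℝ (fun w => Real.log (g w)) z‖ ≤ L) →
    ∫ z, Real.log (g z) ∂ν ≤ Real.log (∫ z, g z ∂μ) + K + T * L

namespace ModifiedLogHarnack

variable {μ ν : Measure X} [IsProbabilityMeasure μ] [IsProbabilityMeasure ν] {K T : ℝ}
  {f : X → ℝ} {M L ε : ℝ}

theorem integral_sub_integral_le (hH : ModifiedLogHarnack μ ν K T) (hf : Differentiable ℝ f)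
    (hfM : ∀ z, |f z| ≤ M) (hfL : ∀ z, ‖fderiv ℝ f z‖ ≤ L) (hε : 0 < ε) (hεM : ε * M < 1 / 2) :
    ∫ z, f z ∂ν - ∫ z, f z ∂μ ≤ ε * M ^ 2 + K / ε + 2 * T * L := by
  have hεf : ∀ z, |ε * f z| ≤ 1 / 2 := fun z => by
    rw [abs_mul, abs_of_pos hε]; nlinarith [hfM z]
  set g : X → ℝ := fun z => 2 * (1 + ε * f z)
  have hg : Differentiable ℝ g := ((hf.const_mul ε).const_add 1).const_mul 2
  have hg1 : ∀ z, 1 ≤ g z := fun z => by have := (abs_le.mp (hεf z)).1; simp only [g]; linarith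
  have hg3 : ∀ z, |g z| ≤ 3 := fun z => by
    have := abs_le.mp (hεf z); rw [abs_le]; simp only [g]; constructor <;> linarith
  have hgL : ∀ z, ‖fderiv ℝ (fun w => Real.log (g w)) z‖ ≤ 2 * ε * L := fun z => by
    refine (norm_fderiv_log_le_of_one_le (hg z) (hg1 z)).trans ?_
    rw [fderiv_const_mul ((hf z).const_mul ε |>.const_add 1), fderiv_const_add,
      fderiv_const_mul (hf z), norm_smul, norm_smul, Real.norm_two, Real.norm_of_nonneg hε.le]
    nlinarith [hfL z]
  have hharnack := hH g 3 (2 * ε * L) hg hg1 hg3 hgL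
  have hlower := log_two_add_mul_integral_sub_le_integral_log ν hf.continuous.measurable hfM hεf
  have hupper := log_integral_two_mul_one_add_le μ hf.continuous.measurable hfM hε.le hεM.le
  have hscaled : ε * (∫ z, f z ∂ν - ∫ z, f z ∂μ) ≤ ε * (ε * M ^ 2 + K / ε + 2 * T * L) := by
    rw [mul_add, mul_add, mul_div_cancel₀ _ hε.ne']
    nlinarith
  exact le_of_mul_le_mul_left hscaled hε

theorem abs_integral_sub_integral_le (hH : ModifiedLogHarnack μ ν K T)
    (hf : Differentiable ℝ f) (hfM : ∀ z, |f z| ≤ M) (hfL : ∀ z, ‖fderiv ℝ f z‖ ≤ L)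
    (hε : 0 < ε) (hεM : ε * M < 1 / 2) :
    |∫ z, f z ∂ν - ∫ z, f z ∂μ| ≤ ε * M ^ 2 + K / ε + 2 * T * L := by
  have hneg := hH.integral_sub_integral_le hf.neg (f := fun z => -f z)
    (fun z => (abs_neg (f z)).trans_le (hfM z))
    (fun z => by rw [fderiv_fun_neg, norm_neg]; exact hfL z) hε hεM
  rw [integral_neg, integral_neg] at hneg
  rw [abs_le]
  constructor
  · linarith
  · exact hH.integral_sub_integral_le hf hfM hfL hε hεM

end ModifiedLogHarnack

end

theorem modified_logHarnack_implies_difference_estimate_general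
    {X : Type*} [NormedAddCommGroup X] [NormedSpace ℝ X]
    [MeasurableSpace X] [BorelSpace X]
    (P : ℝ → X → Measure X) (hP : ∀ t x, IsProbabilityMeasure (P t x))
    (α β : ℝ)
    (C Ct : ℝ → ℝ → ℝ)
    (δ : ℝ → ℝ)
    -- modified log-Harnack inequality for bounded differentiable f ≥ 1
    (hMLH : ∀ (f : X → ℝ) (M L : ℝ), Differentiable ℝ f → (∀ z, 1 ≤ f z) →
      (∀ z, |f z| ≤ M) →
      (∀ z, ‖fderiv ℝ (fun w => Real.log (f w)) z‖ ≤ L) →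
      ∀ (t : ℝ) (x y : X),
        ∫ z, Real.log (f z) ∂(P t y) ≤ Real.log (∫ z, f z ∂(P t x))
          + C ‖x‖ ‖y‖ * dist x y ^ α + δ t * Ct ‖x‖ ‖y‖ * dist x y ^ β * L) :
    -- conclusion: estimate (2.5)
    ∀ (f : X → ℝ) (M L : ℝ), Differentiable ℝ f → (∀ z, |f z| ≤ M) →
      (∀ z, ‖fderiv ℝ f z‖ ≤ L) →
      ∀ ε : ℝ, 0 < ε → ε * M < 1 / 2 →
      ∀ (t : ℝ) (x y : X),
        |(∫ z, f z ∂(P t y)) - ∫ z, f z ∂(P t x)| ≤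
          ε * M ^ 2 + C ‖x‖ ‖y‖ * dist x y ^ α / ε
            + 2 * δ t * Ct ‖x‖ ‖y‖ * dist x y ^ β * L := by
  intro f M L hf hfM hfL ε hε hεM t x y
  have := hP t x
  have := hP t y
  have hH : ModifiedLogHarnack (P t x) (P t y) (C ‖x‖ ‖y‖ * dist x y ^ α)
      (δ t * Ct ‖x‖ ‖y‖ * dist x y ^ β) := fun g M L hg hg1 hgM hgL =>
    hMLH g M L hg hg1 hgM hgL t x y
  simpa only [mul_assoc] using hH.abs_integral_sub_integral_le hf hfM hfL hε hεM

/-- If a Markov semigroup satisfies the modified log-Harnack inequality, then the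
pointwise difference estimate (2.5) of the paper holds. -/
theorem modified_logHarnack_implies_difference_estimate
    {X : Type*} [NormedAddCommGroup X] [NormedSpace ℝ X]
    [MeasurableSpace X] [BorelSpace X]
    (P : ℝ → X → Measure X) (hP : ∀ t x, IsProbabilityMeasure (P t x))
    (α β : ℝ) (hα : 0 < α) (hβ : 0 ≤ β)
    (C Ct : ℝ → ℝ → ℝ)
    (hCpos : ∀ r s, 0 < C r s) (hCtpos : ∀ r s, 0 < Ct r s)
    (hCcont : Continuous fun p : ℝ × ℝ => C p.1 p.2)
    (hCtcont : Continuous fun p : ℝ × ℝ => Ct p.1 p.2)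
    (δ : ℝ → ℝ) (hδ : ∀ t, 0 ≤ δ t) (hδ0 : Tendsto δ atTop (nhds 0))
    -- modified log-Harnack inequality for bounded differentiable f ≥ 1
    (hMLH : ∀ (f : X → ℝ) (M L : ℝ), Differentiable ℝ f → (∀ z, 1 ≤ f z) →
      (∀ z, |f z| ≤ M) →
      (∀ z, ‖fderiv ℝ (fun w => Real.log (f w)) z‖ ≤ L) →
      ∀ (t : ℝ) (x y : X),
        ∫ z, Real.log (f z) ∂(P t y) ≤ Real.log (∫ z, f z ∂(P t x))
          + C ‖x‖ ‖y‖ * dist x y ^ α + δ t * Ct ‖x‖ ‖y‖ * dist x y ^ β * L) :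
    -- conclusion: estimate (2.5)
    ∀ (f : X → ℝ) (M L : ℝ), Differentiable ℝ f → (∀ z, |f z| ≤ M) →
      (∀ z, ‖fderiv ℝ f z‖ ≤ L) →
      ∀ ε : ℝ, 0 < ε → ε * M < 1 / 2 →
      ∀ (t : ℝ) (x y : X),
        |(∫ z, f z ∂(P t y)) - ∫ z, f z ∂(P t x)| ≤
          ε * M ^ 2 + C ‖x‖ ‖y‖ * dist x y ^ α / ε
            + 2 * δ t * Ct ‖x‖ ‖y‖ * dist x y ^ β * L :=
  modified_logHarnack_implies_difference_estimate_general P hP α β C Ct δ hMLH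
end

section
/- Under the hypotheses of the previous estimate with α = 2 and β = 1, the gradient bound |D P_t f(x)| ≤ ‖f‖²_∞ + C(‖x‖,‖x‖) + δ(t)·C̃(‖x‖,‖x‖)·‖Df‖_∞ holds for every bounded differentiable function f and every x. -/
/-!
Test the modified log-Harnack inequality with `g = exp (r (f + M)) ≥ 1`, where `r = |x - y|`.
Then `log g = r f + r M`, so `‖D log g‖ ≤ r ‖Df‖`, and the quadratic bound `exp u ≤ 1 + u + u²`
for `|u| ≤ 1` gives `log P_t g ≤ r (P_t f + M) + r² M²`. Dividing by `r` yields
`P_t f(y) - P_t f(x) ≤ |x - y| (M² + C + δ(t) C̃ ‖Df‖_∞)`, and letting `y → x` bounds the derivative.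
-/

open MeasureTheory Filter Topology

lemma Real.exp_le_one_add_add_sq {u : ℝ} (hu : |u| ≤ 1) : Real.exp u ≤ 1 + u + u ^ 2 := by
  linarith [(abs_le.1 (Real.abs_exp_sub_one_sub_id_le hu)).2]

lemma integral_exp_mul_le_exp {α : Type*} [MeasurableSpace α] {μ : Measure α}
    [IsProbabilityMeasure μ] {f : α → ℝ} {M r : ℝ} (hf : AEStronglyMeasurable f μ)
    (hfM : ∀ z, |f z| ≤ M) (hr : 0 ≤ r) (hrM : r * M ≤ 1) :
    ∫ z, Real.exp (r * f z) ∂μ ≤ Real.exp (r * ∫ z, f z ∂μ + r ^ 2 * M ^ 2) := by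
  have hpt : ∀ z, Real.exp (r * f z) ≤ 1 + r * f z + r ^ 2 * M ^ 2 := fun z => by
    have hrf : |r * f z| ≤ r * M := by
      rw [abs_mul, abs_of_nonneg hr]
      exact mul_le_mul_of_nonneg_left (hfM z) hr
    have hsq : (r * f z) ^ 2 ≤ r ^ 2 * M ^ 2 := by
      rw [← mul_pow, ← sq_abs]
      exact pow_le_pow_left₀ (abs_nonneg _) hrf 2
    linarith [Real.exp_le_one_add_add_sq (hrf.trans hrM)]
  have hfi : Integrable f μ := .of_bound hf M (.of_forall hfM)
  have hlin : Integrable (fun z => 1 + r * f z) μ := (integrable_const 1).add (hfi.const_mul r)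
  have hquad : Integrable (fun z => 1 + r * f z + r ^ 2 * M ^ 2) μ := hlin.add (integrable_const _)
  calc ∫ z, Real.exp (r * f z) ∂μ
      ≤ ∫ z, (1 + r * f z + r ^ 2 * M ^ 2) ∂μ :=
      integral_mono_of_nonneg (.of_forall fun z => (Real.exp_pos _).le) hquad (.of_forall hpt)
    _ = r * ∫ z, f z ∂μ + r ^ 2 * M ^ 2 + 1 := by
      rw [integral_add hlin (integrable_const _), integral_add (integrable_const 1) (hfi.const_mul r),
        integral_const_mul]
      simp only [integral_const, probReal_univ, smul_eq_mul, one_mul]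
      ring
    _ ≤ Real.exp (r * ∫ z, f z ∂μ + r ^ 2 * M ^ 2) := Real.add_one_le_exp _

lemma integral_le_integral_add_of_logHarnack {X : Type*} [NormedAddCommGroup X]
    [NormedSpace ℝ X] [MeasurableSpace X] [BorelSpace X] {μ ν : Measure X}
    [IsProbabilityMeasure μ] [IsProbabilityMeasure ν] {f : X → ℝ} {M L r A D : ℝ}
    (hf : Differentiable ℝ f) (hfM : ∀ z, |f z| ≤ M) (hfL : ∀ z, ‖fderiv ℝ f z‖ ≤ L)
    (hr : 0 < r) (hrM : r * M ≤ 1)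
    (hH : ∀ (g : X → ℝ) (Mg Lg : ℝ), Differentiable ℝ g → (∀ z, 1 ≤ g z) →
      (∀ z, |g z| ≤ Mg) → (∀ z, ‖fderiv ℝ (fun w => Real.log (g w)) z‖ ≤ Lg) →
      ∫ z, Real.log (g z) ∂ν ≤ Real.log (∫ z, g z ∂μ) + A * r ^ 2 + D * r * Lg) :
    ∫ z, f z ∂ν ≤ ∫ z, f z ∂μ + r * (M ^ 2 + A + D * L) := by
  set g : X → ℝ := fun z => Real.exp (r * f z + r * M)
  have hlog : (fun w => Real.log (g w)) = fun w => r * f w + r * M := by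
    funext w; exact Real.log_exp _
  have hgd : Differentiable ℝ g := ((hf.const_mul r).add_const _).exp
  have hg1 : ∀ z, 1 ≤ g z := fun z => Real.one_le_exp (by
    nlinarith [neg_le_of_abs_le (hfM z)])
  have hgM : ∀ z, |g z| ≤ Real.exp (2 * r * M) := fun z => by
    rw [abs_of_pos (Real.exp_pos _)]
    exact Real.exp_le_exp.2 (by nlinarith [le_of_abs_le (hfM z)])
  have hgL : ∀ z, ‖fderiv ℝ (fun w => Real.log (g w)) z‖ ≤ r * L := fun z => by
    rw [hlog, fderiv_add_const, fderiv_const_mul (hf z), norm_smul, Real.norm_eq_abs,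
      abs_of_pos hr]
    exact mul_le_mul_of_nonneg_left (hfL z) hr.le
  have hfi : Integrable f ν := .of_bound hf.continuous.aestronglyMeasurable M (.of_forall hfM)
  have hlhs : ∫ z, Real.log (g z) ∂ν = r * ∫ z, f z ∂ν + r * M := by
    rw [hlog, integral_add (hfi.const_mul r) (integrable_const _), integral_const_mul]
    simp
  have hrhs : Real.log (∫ z, g z ∂μ) ≤ r * ∫ z, f z ∂μ + r ^ 2 * M ^ 2 + r * M := by
    have hgi : Integrable g μ := .of_bound hgd.continuous.aestronglyMeasurable _ (.of_forall hgM)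
    have hsplit : ∫ z, g z ∂μ = (∫ z, Real.exp (r * f z) ∂μ) * Real.exp (r * M) := by
      simp only [g, Real.exp_add, integral_mul_const]
    rw [← Real.log_exp (_ + r * M), Real.exp_add]
    refine Real.log_le_log (integral_exp_pos hgi) ?_
    rw [hsplit]
    exact mul_le_mul_of_nonneg_right
      (integral_exp_mul_le_exp hf.continuous.aestronglyMeasurable hfM hr.le hrM) (Real.exp_pos _).le
  have hH' := hH g _ _ hgd hg1 hgM hgL
  have hmul : r * ∫ z, f z ∂ν ≤ r * (∫ z, f z ∂μ + r * (M ^ 2 + A + D * L)) := by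
    nlinarith
  exact le_of_mul_le_mul_left hmul hr

lemma norm_fderiv_le_of_eventually_le_mul {𝕜 E F : Type*} [NontriviallyNormedField 𝕜]
    [NormedAddCommGroup E] [NormedSpace 𝕜 E] [NormedAddCommGroup F] [NormedSpace 𝕜 F]
    {f : E → F} {x : E} {K : E → ℝ} (hK : ContinuousAt K x) (hK₀ : 0 ≤ K x)
    (hlip : ∀ᶠ y in 𝓝 x, ‖f y - f x‖ ≤ K y * ‖y - x‖) : ‖fderiv 𝕜 f x‖ ≤ K x := by
  refine le_of_forall_pos_le_add fun ε hε => norm_fderiv_le_of_lip' 𝕜 (by positivity) ?_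
  filter_upwards [hlip, hK.eventually (gt_mem_nhds (lt_add_of_pos_right (K x) hε))]
    with y hy hKy
  exact hy.trans (mul_le_mul_of_nonneg_right hKy.le (norm_nonneg _))

lemma norm_fderiv_le_of_le_add_dist_mul {E : Type*} [NormedAddCommGroup E] [NormedSpace ℝ E]
    {f : E → ℝ} {x : E} {k : E → E → ℝ} {ρ : ℝ} (hρ : 0 < ρ)
    (hk : ContinuousAt (fun p : E × E => k p.1 p.2) (x, x)) (hk₀ : 0 ≤ k x x)
    (hf : ∀ a b, 0 < dist a b → dist a b < ρ → f b ≤ f a + dist a b * k a b) :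
    ‖fderiv ℝ f x‖ ≤ k x x := by
  have hK : ContinuousAt (fun y => max (k x y) (k y x)) x :=
    (hk.comp_of_eq (continuous_const.prodMk continuous_id).continuousAt rfl).max
      (hk.comp_of_eq (continuous_id.prodMk continuous_const).continuousAt rfl)
  refine (norm_fderiv_le_of_eventually_le_mul hK (by simpa using hk₀) ?_).trans (max_self _).le
  filter_upwards [Metric.ball_mem_nhds x hρ] with y hy
  rcases eq_or_ne y x with rfl | hyx
  · simp
  have hd₀ : 0 < dist y x := dist_pos.2 hyx
  have hd : dist y x < ρ := hy
  have hxy := hf x y (dist_comm x y ▸ hd₀) (dist_comm x y ▸ hd)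
  have hyx := hf y x hd₀ hd
  rw [dist_comm x y] at hxy
  rw [Real.norm_eq_abs, abs_sub_le_iff, ← dist_eq_norm]
  constructor <;> nlinarith [le_max_left (k x y) (k y x), le_max_right (k x y) (k y x)]

theorem modified_logHarnack_implies_gradient_bound_general
    {X : Type*} [NormedAddCommGroup X] [NormedSpace ℝ X]
    [MeasurableSpace X] [BorelSpace X]
    (P : ℝ → X → Measure X) (hP : ∀ t x, IsProbabilityMeasure (P t x))
    (C Ct : ℝ → ℝ → ℝ)
    (hCpos : ∀ r s, 0 < C r s) (hCtpos : ∀ r s, 0 < Ct r s)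
    (hCcont : Continuous fun p : ℝ × ℝ => C p.1 p.2)
    (hCtcont : Continuous fun p : ℝ × ℝ => Ct p.1 p.2)
    (δ : ℝ → ℝ) (hδ : ∀ t, 0 ≤ δ t)
    -- modified log-Harnack inequality with α = 2, β = 1
    (hMLH : ∀ (f : X → ℝ) (M L : ℝ), Differentiable ℝ f → (∀ z, 1 ≤ f z) →
      (∀ z, |f z| ≤ M) →
      (∀ z, ‖fderiv ℝ (fun w => Real.log (f w)) z‖ ≤ L) →
      ∀ (t : ℝ) (x y : X),
        ∫ z, Real.log (f z) ∂(P t y) ≤ Real.log (∫ z, f z ∂(P t x))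
          + C ‖x‖ ‖y‖ * dist x y ^ 2 + δ t * Ct ‖x‖ ‖y‖ * dist x y * L) :
    ∀ (f : X → ℝ) (M L : ℝ), Differentiable ℝ f → (∀ z, |f z| ≤ M) →
      (∀ z, ‖fderiv ℝ f z‖ ≤ L) →
      ∀ (t : ℝ) (x : X),
        ‖fderiv ℝ (fun y => ∫ z, f z ∂(P t y)) x‖ ≤
          M ^ 2 + C ‖x‖ ‖x‖ + δ t * Ct ‖x‖ ‖x‖ * L := by
  intro f M L hf hfM hfL t x
  have hM : 0 ≤ M := (abs_nonneg _).trans (hfM x)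
  have hk : Continuous fun p : X × X => M ^ 2 + C ‖p.1‖ ‖p.2‖ + δ t * Ct ‖p.1‖ ‖p.2‖ * L := by
    have hC : Continuous fun p : X × X => C ‖p.1‖ ‖p.2‖ :=
      hCcont.comp (continuous_norm.prodMap continuous_norm)
    have hCt : Continuous fun p : X × X => Ct ‖p.1‖ ‖p.2‖ :=
      hCtcont.comp (continuous_norm.prodMap continuous_norm)
    fun_prop
  have hk₀ : 0 ≤ M ^ 2 + C ‖x‖ ‖x‖ + δ t * Ct ‖x‖ ‖x‖ * L := by
    have hδCt := mul_nonneg (mul_nonneg (hδ t) (hCtpos ‖x‖ ‖x‖).le) ((norm_nonneg _).trans (hfL x))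
    linarith [hCpos ‖x‖ ‖x‖, sq_nonneg M]
  refine norm_fderiv_le_of_le_add_dist_mul
    (k := fun a b => M ^ 2 + C ‖a‖ ‖b‖ + δ t * Ct ‖a‖ ‖b‖ * L) (one_div_pos.2 (by linarith : (0 : ℝ) < M + 1))
    hk.continuousAt hk₀ fun a b hab habρ => ?_
  have hrM : dist a b * M ≤ 1 := by
    rw [lt_div_iff₀ (by linarith)] at habρ
    nlinarith
  have := hP t a
  have := hP t b
  exact integral_le_integral_add_of_logHarnack hf hfM hfL hab hrM
    fun g Mg Lg hg hg1 hgM hgL => hMLH g Mg Lg hg hg1 hgM hgL t a b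

/-- Corollary 1.3: the modified log-Harnack inequality with `α = 2`, `β = 1`
implies the Hairer–Mattingly-type gradient bound
`|D P_t f(x)| ≤ ‖f‖²_∞ + C + δ(t) C̃ ‖Df‖_∞`. -/
theorem modified_logHarnack_implies_gradient_bound
    {X : Type*} [NormedAddCommGroup X] [NormedSpace ℝ X]
    [MeasurableSpace X] [BorelSpace X]
    (P : ℝ → X → Measure X) (hP : ∀ t x, IsProbabilityMeasure (P t x))
    (C Ct : ℝ → ℝ → ℝ)
    (hCpos : ∀ r s, 0 < C r s) (hCtpos : ∀ r s, 0 < Ct r s)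
    (hCcont : Continuous fun p : ℝ × ℝ => C p.1 p.2)
    (hCtcont : Continuous fun p : ℝ × ℝ => Ct p.1 p.2)
    (δ : ℝ → ℝ) (hδ : ∀ t, 0 ≤ δ t) (hδ0 : Tendsto δ atTop (nhds 0))
    -- modified log-Harnack inequality with α = 2, β = 1
    (hMLH : ∀ (f : X → ℝ) (M L : ℝ), Differentiable ℝ f → (∀ z, 1 ≤ f z) →
      (∀ z, |f z| ≤ M) →
      (∀ z, ‖fderiv ℝ (fun w => Real.log (f w)) z‖ ≤ L) →
      ∀ (t : ℝ) (x y : X),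
        ∫ z, Real.log (f z) ∂(P t y) ≤ Real.log (∫ z, f z ∂(P t x))
          + C ‖x‖ ‖y‖ * dist x y ^ 2 + δ t * Ct ‖x‖ ‖y‖ * dist x y * L) :
    ∀ (f : X → ℝ) (M L : ℝ), Differentiable ℝ f → (∀ z, |f z| ≤ M) →
      (∀ z, ‖fderiv ℝ f z‖ ≤ L) →
      ∀ (t : ℝ) (x : X),
        ‖fderiv ℝ (fun y => ∫ z, f z ∂(P t y)) x‖ ≤
          M ^ 2 + C ‖x‖ ‖x‖ + δ t * Ct ‖x‖ ‖x‖ * L :=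
  modified_logHarnack_implies_gradient_bound_general P hP C Ct hCpos hCtpos hCcont hCtcont δ hδ hMLH
end

section
/- Let μ₁, μ₂ be probability measures on a Polish space X, and let {d_n} be a nondecreasing sequence of bounded continuous pseudo-metrics with d_n ≤ 1 and d_n(x,y) → 1 for all x ≠ y. Then the Wasserstein-type distances ‖μ₁ − μ₂‖_{d_n} := inf_{π ∈ C(μ₁,μ₂)} ∫ d_n(x,y) dπ converge to the total variation distance ‖μ₁ − μ₂‖_{TV} as n → ∞. -/
/-!
Take a Hahn decomposition `(A, Aᶜ)` of `μ₁ - μ₂`. Every coupling moves at least `μ₁ A - μ₂ A`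
off the diagonal, and keeping the common part `μ₂|A + μ₁|Aᶜ` on the diagonal while coupling the
remainders independently attains this, so the total variation distance is `μ₁ A - μ₂ A`; the
`d n`-costs lie below it because `d n ≤ 1_{x ≠ y}`. Conversely, choose compact `K ⊆ A` and
`K' ⊆ Aᶜ` carrying almost all of `μ₁ A` and `μ₂ Aᶜ`. By Dini's theorem `d n ≥ 1 - ε` on `K × K'`
for large `n`, and integrating the `d n`-Lipschitz test function `x ↦ min 1 (inf_{y ∈ K'} d n x y)`
against an arbitrary coupling bounds its `d n`-cost below by `μ₁ K - μ₂ K'ᶜ - ε`.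
-/

open MeasureTheory Filter Set Topology
open scoped ENNReal

noncomputable def transportCost {X : Type*} [MeasurableSpace X] (μ₁ μ₂ : Measure X)
    (c : Measure (X × X) → ℝ) : ℝ :=
  sInf {r : ℝ | ∃ π : Measure (X × X), π.map Prod.fst = μ₁ ∧ π.map Prod.snd = μ₂ ∧ r = c π}

lemma integrable_of_nonneg_of_le_one {α : Type*} [MeasurableSpace α] {μ : Measure α}
    [IsFiniteMeasure μ] {f : α → ℝ} (hf : Measurable f) (h₀ : ∀ x, 0 ≤ f x)
    (h₁ : ∀ x, f x ≤ 1) : Integrable f μ :=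
  .of_bound hf.aestronglyMeasurable 1 <| .of_forall fun x => by
    rw [Real.norm_of_nonneg (h₀ x)]; exact h₁ x

section Coupling

variable {X : Type*} [MeasurableSpace X] {μ₁ μ₂ : Measure X} {π : Measure (X × X)}
  {c c' : Measure (X × X) → ℝ}

lemma isProbabilityMeasure_of_map_fst [IsProbabilityMeasure μ₁] (h₁ : π.map Prod.fst = μ₁) :
    IsProbabilityMeasure π := by
  subst h₁; exact Measure.isProbabilityMeasure_of_map Prod.fst

lemma exists_coupling (μ₁ μ₂ : Measure X) [IsProbabilityMeasure μ₁] [IsProbabilityMeasure μ₂] :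
    ∃ π : Measure (X × X), π.map Prod.fst = μ₁ ∧ π.map Prod.snd = μ₂ :=
  ⟨μ₁.prod μ₂, by simp, by simp⟩

lemma transportCost_le (h₁ : π.map Prod.fst = μ₁) (h₂ : π.map Prod.snd = μ₂) {b : ℝ}
    (hb : ∀ π : Measure (X × X), π.map Prod.fst = μ₁ → π.map Prod.snd = μ₂ → b ≤ c π) :
    transportCost μ₁ μ₂ c ≤ c π :=
  csInf_le ⟨b, by rintro _ ⟨π, h₁, h₂, rfl⟩; exact hb π h₁ h₂⟩ ⟨π, h₁, h₂, rfl⟩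

lemma le_transportCost [IsProbabilityMeasure μ₁] [IsProbabilityMeasure μ₂] {b : ℝ}
    (hb : ∀ π : Measure (X × X), π.map Prod.fst = μ₁ → π.map Prod.snd = μ₂ → b ≤ c π) :
    b ≤ transportCost μ₁ μ₂ c := by
  obtain ⟨π, h₁, h₂⟩ := exists_coupling μ₁ μ₂
  exact le_csInf ⟨c π, π, h₁, h₂, rfl⟩ (by rintro _ ⟨π, h₁, h₂, rfl⟩; exact hb π h₁ h₂)

lemma transportCost_mono [IsProbabilityMeasure μ₁] [IsProbabilityMeasure μ₂] {b : ℝ}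
    (hb : ∀ π : Measure (X × X), π.map Prod.fst = μ₁ → π.map Prod.snd = μ₂ → b ≤ c π)
    (hcc' : ∀ π : Measure (X × X), π.map Prod.fst = μ₁ → π.map Prod.snd = μ₂ → c π ≤ c' π) :
    transportCost μ₁ μ₂ c ≤ transportCost μ₁ μ₂ c' :=
  le_transportCost fun π h₁ h₂ => (transportCost_le h₁ h₂ hb).trans (hcc' π h₁ h₂)

lemma measureReal_sub_le_measureReal_compl_diagonal [IsFiniteMeasure π]
    (h₁ : π.map Prod.fst = μ₁) (h₂ : π.map Prod.snd = μ₂) {A : Set X} (hA : MeasurableSet A) :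
    μ₁.real A - μ₂.real A ≤ π.real (diagonal X)ᶜ := by
  have hsub : Prod.fst ⁻¹' A ⊆ Prod.snd ⁻¹' A ∪ (diagonal X)ᶜ := by
    rintro ⟨x, y⟩ hx
    by_cases h : x = y
    · exact Or.inl (h ▸ hx)
    · exact Or.inr h
  rw [← h₁, ← h₂, map_measureReal_apply measurable_fst hA,
    map_measureReal_apply measurable_snd hA, sub_le_iff_le_add']
  exact (measureReal_mono hsub).trans (measureReal_union_le _ _)

lemma map_fst_inv_smul_prod {ρ₁ ρ₂ : Measure X} [IsFiniteMeasure ρ₂] {t : ℝ≥0∞}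
    (h₁ : ρ₁ univ = t) (h₂ : ρ₂ univ = t) :
    (t⁻¹ • ρ₁.prod ρ₂).map Prod.fst = ρ₁ := by
  rw [Measure.map_smul, Measure.map_fst_prod, smul_smul, h₂]
  rcases eq_or_ne t 0 with rfl | ht
  · simp [Measure.measure_univ_eq_zero.1 h₁]
  · rw [ENNReal.inv_mul_cancel ht (h₂ ▸ measure_ne_top _ _), one_smul]

lemma map_snd_inv_smul_prod {ρ₁ ρ₂ : Measure X} [IsFiniteMeasure ρ₁] [IsFiniteMeasure ρ₂]
    {t : ℝ≥0∞} (h₁ : ρ₁ univ = t) (h₂ : ρ₂ univ = t) :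
    (t⁻¹ • ρ₁.prod ρ₂).map Prod.snd = ρ₂ := by
  rw [Measure.map_smul, Measure.map_snd_prod, smul_smul, h₁]
  rcases eq_or_ne t 0 with rfl | ht
  · simp [Measure.measure_univ_eq_zero.1 h₂]
  · rw [ENNReal.inv_mul_cancel ht (h₁ ▸ measure_ne_top _ _), one_smul]

lemma exists_coupling_measure_compl_diagonal_le [MeasurableEq X] [IsFiniteMeasure μ₁]
    [IsFiniteMeasure μ₂] {ν : Measure X} (h₁ : ν ≤ μ₁) (h₂ : ν ≤ μ₂) (huniv : μ₁ univ = μ₂ univ) :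
    ∃ π : Measure (X × X), π.map Prod.fst = μ₁ ∧ π.map Prod.snd = μ₂ ∧
      π (diagonal X)ᶜ ≤ μ₁ univ - ν univ := by
  have : IsFiniteMeasure ν := isFiniteMeasure_of_le μ₁ h₁
  have hdiag : Measurable fun x : X => (x, x) := measurable_id.prodMk measurable_id
  set t := μ₁ univ - ν univ
  have ht₁ : (μ₁ - ν) univ = t := Measure.sub_apply .univ h₁
  have ht₂ : (μ₂ - ν) univ = t := by rw [Measure.sub_apply .univ h₂, ← huniv]
  have hfst := map_fst_inv_smul_prod ht₁ ht₂
  refine ⟨ν.map (fun x => (x, x)) + t⁻¹ • (μ₁ - ν).prod (μ₂ - ν), ?_, ?_, ?_⟩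
  · rw [Measure.map_add _ _ measurable_fst, Measure.map_map measurable_fst hdiag, hfst,
      add_comm]
    simpa only [Function.comp_def, Measure.map_id'] using Measure.sub_add_cancel_of_le h₁
  · rw [Measure.map_add _ _ measurable_snd, Measure.map_map measurable_snd hdiag,
      map_snd_inv_smul_prod ht₁ ht₂, add_comm]
    simpa only [Function.comp_def, Measure.map_id'] using Measure.sub_add_cancel_of_le h₂
  · have hoff : (fun x : X => (x, x)) ⁻¹' (diagonal X)ᶜ = ∅ := by ext; simp
    rw [Measure.add_apply, Measure.map_apply hdiag measurableSet_diagonal.compl, hoff,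
      measure_empty, zero_add]
    calc (t⁻¹ • (μ₁ - ν).prod (μ₂ - ν)) (diagonal X)ᶜ
        ≤ (t⁻¹ • (μ₁ - ν).prod (μ₂ - ν)) (Prod.fst ⁻¹' univ) := measure_mono (subset_univ _)
      _ = t := by rw [← Measure.map_apply measurable_fst .univ, hfst, ht₁]

lemma restrict_add_restrict_compl_le {μ ν : Measure X} {A : Set X} (hA : MeasurableSet A)
    (h : ∀ s, MeasurableSet s → s ⊆ A → ν s ≤ μ s) : ν.restrict A + μ.restrict Aᶜ ≤ μ := by
  conv_rhs => rw [← Measure.restrict_add_restrict_compl (μ := μ) hA]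
  refine add_le_add_left (Measure.le_iff.2 fun s hs => ?_) _
  rw [Measure.restrict_apply hs, Measure.restrict_apply hs]
  exact h _ (hs.inter hA) inter_subset_right

theorem transportCost_measureReal_compl_diagonal [MeasurableEq X] [IsProbabilityMeasure μ₁]
    [IsProbabilityMeasure μ₂] {A : Set X} (hA : MeasurableSet A)
    (hA₁ : ∀ s, MeasurableSet s → s ⊆ A → μ₂ s ≤ μ₁ s)
    (hA₂ : ∀ s, MeasurableSet s → s ⊆ Aᶜ → μ₁ s ≤ μ₂ s) :
    transportCost μ₁ μ₂ (fun π => π.real (diagonal X)ᶜ) = μ₁.real A - μ₂.real A := by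
  have hν₂ : μ₂.restrict A + μ₁.restrict Aᶜ ≤ μ₂ := by
    simpa [add_comm] using restrict_add_restrict_compl_le hA.compl hA₂
  obtain ⟨π₀, h₁, h₂, hπ₀⟩ :=
    exists_coupling_measure_compl_diagonal_le (restrict_add_restrict_compl_le hA hA₁) hν₂
      (by simp)
  have : IsProbabilityMeasure π₀ := isProbabilityMeasure_of_map_fst h₁
  have hmass : μ₁ univ - (μ₂.restrict A + μ₁.restrict Aᶜ) univ = μ₁ A - μ₂ A := by
    rw [← measure_add_measure_compl hA]
    simp [ENNReal.add_sub_add_eq_sub_right]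
  refine le_antisymm ?_ <| le_transportCost fun π h₁ h₂ =>
    have := isProbabilityMeasure_of_map_fst h₁
    measureReal_sub_le_measureReal_compl_diagonal h₁ h₂ hA
  calc transportCost μ₁ μ₂ (fun π => π.real (diagonal X)ᶜ)
      ≤ π₀.real (diagonal X)ᶜ := transportCost_le h₁ h₂ fun _ _ _ => measureReal_nonneg
    _ ≤ (μ₁ A - μ₂ A).toReal := ENNReal.toReal_mono (by finiteness) (hmass ▸ hπ₀)
    _ = μ₁.real A - μ₂.real A := ENNReal.toReal_sub_of_le (hA₁ A hA subset_rfl) (by finiteness)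

lemma transportCost_integral_le_measureReal_compl_diagonal [MeasurableEq X]
    [IsProbabilityMeasure μ₁] [IsProbabilityMeasure μ₂] {e : X → X → ℝ}
    (he : Measurable fun p : X × X => e p.1 p.2) (he_nonneg : ∀ x y, 0 ≤ e x y)
    (he_refl : ∀ x, e x x = 0) (he_le_one : ∀ x y, e x y ≤ 1) :
    transportCost μ₁ μ₂ (fun π => ∫ p, e p.1 p.2 ∂π) ≤
      transportCost μ₁ μ₂ (fun π => π.real (diagonal X)ᶜ) := by
  refine transportCost_mono (b := 0) (fun π _ _ => integral_nonneg fun p => he_nonneg _ _)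
    fun π h₁ _ => ?_
  have : IsProbabilityMeasure π := isProbabilityMeasure_of_map_fst h₁
  have hle : ∀ p : X × X, e p.1 p.2 ≤ (diagonal X)ᶜ.indicator (fun _ => 1) p := by
    rintro ⟨x, y⟩
    by_cases h : x = y
    · simp [h, he_refl]
    · simpa [h] using he_le_one x y
  calc ∫ p, e p.1 p.2 ∂π ≤ ∫ p, (diagonal X)ᶜ.indicator (fun _ => (1 : ℝ)) p ∂π :=
        integral_mono (integrable_of_nonneg_of_le_one he (fun _ => he_nonneg _ _)
          fun _ => he_le_one _ _) ((integrable_const 1).indicator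
            measurableSet_diagonal.compl) hle
    _ = π.real (diagonal X)ᶜ := by
        rw [integral_indicator_const _ measurableSet_diagonal.compl, smul_eq_mul, mul_one]

lemma integral_sub_integral_le_integral_of_coupling (h₁ : π.map Prod.fst = μ₁)
    (h₂ : π.map Prod.snd = μ₂) {g : X → ℝ} (hg₁ : Integrable g μ₁) (hg₂ : Integrable g μ₂)
    {c : X × X → ℝ} (hc : Integrable c π) (hgc : ∀ p, g p.1 - g p.2 ≤ c p) :
    ∫ x, g x ∂μ₁ - ∫ x, g x ∂μ₂ ≤ ∫ p, c p ∂π := by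
  subst h₁ h₂
  have hg₁' : Integrable (fun p : X × X => g p.1) π := hg₁.comp_measurable measurable_fst
  have hg₂' : Integrable (fun p : X × X => g p.2) π := hg₂.comp_measurable measurable_snd
  rw [integral_map measurable_fst.aemeasurable hg₁.aestronglyMeasurable,
    integral_map measurable_snd.aemeasurable hg₂.aestronglyMeasurable, ← integral_sub hg₁' hg₂']
  exact integral_mono (hg₁'.sub hg₂') hc hgc

end Coupling

section TruncInfDist

variable {X : Type*} {e : X → X → ℝ} {s : Set X}

-- The cap at `1` avoids the junk value `sInf ∅ = 0` when `s = ∅`.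
noncomputable def truncInfDist (e : X → X → ℝ) (s : Set X) (x : X) : ℝ :=
  sInf (insert 1 (e x '' s))

lemma bddBelow_insert_one_image (he : ∀ x y, 0 ≤ e x y) (x : X) :
    BddBelow (insert 1 (e x '' s)) :=
  ⟨0, by rintro _ (rfl | ⟨y, -, rfl⟩); exacts [zero_le_one, he x y]⟩

lemma truncInfDist_nonneg (he : ∀ x y, 0 ≤ e x y) (x : X) : 0 ≤ truncInfDist e s x :=
  le_csInf (insert_nonempty _ _) (by rintro _ (rfl | ⟨y, -, rfl⟩); exacts [zero_le_one, he x y])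

lemma truncInfDist_le_one (he : ∀ x y, 0 ≤ e x y) (x : X) : truncInfDist e s x ≤ 1 :=
  csInf_le (bddBelow_insert_one_image he x) (mem_insert _ _)

lemma truncInfDist_eq_zero_of_mem (he : ∀ x y, 0 ≤ e x y) (he_refl : ∀ x, e x x = 0) {x : X}
    (hx : x ∈ s) : truncInfDist e s x = 0 :=
  le_antisymm ((csInf_le (bddBelow_insert_one_image he x)
    (mem_insert_of_mem _ ⟨x, hx, rfl⟩)).trans_eq (he_refl x)) (truncInfDist_nonneg he x)

lemma one_sub_le_truncInfDist {ε : ℝ} (hε : 0 ≤ ε) {x : X} (h : ∀ y ∈ s, 1 - ε ≤ e x y) :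
    1 - ε ≤ truncInfDist e s x :=
  le_csInf (insert_nonempty _ _) (by rintro _ (rfl | ⟨y, hy, rfl⟩); exacts [by linarith, h y hy])

lemma truncInfDist_le_add (he : ∀ x y, 0 ≤ e x y) (he_tri : ∀ x y z, e x z ≤ e x y + e y z)
    (x x' : X) : truncInfDist e s x ≤ truncInfDist e s x' + e x x' := by
  rw [← sub_le_iff_le_add]
  refine le_csInf (insert_nonempty _ _) ?_
  rintro _ (rfl | ⟨y, hy, rfl⟩)
  · linarith [truncInfDist_le_one (s := s) he x, he x x']
  · have : truncInfDist e s x ≤ e x y :=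
      csInf_le (bddBelow_insert_one_image he x) (mem_insert_of_mem _ ⟨y, hy, rfl⟩)
    linarith [he_tri x x' y]

lemma continuous_truncInfDist [TopologicalSpace X] (he_cont : Continuous fun p : X × X => e p.1 p.2)
    (he : ∀ x y, 0 ≤ e x y) (he_refl : ∀ x, e x x = 0)
    (he_tri : ∀ x y z, e x z ≤ e x y + e y z) : Continuous (truncInfDist e s) := by
  refine continuous_iff_continuousAt.2 fun x₀ => tendsto_iff_dist_tendsto_zero.2 ?_
  have hdist : ∀ x, dist (truncInfDist e s x) (truncInfDist e s x₀) ≤ e x x₀ + e x₀ x := by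
    intro x
    rw [Real.dist_eq, abs_sub_le_iff]
    constructor <;> linarith [truncInfDist_le_add (s := s) he he_tri x x₀,
      truncInfDist_le_add (s := s) he he_tri x₀ x, he x x₀, he x₀ x]
  have hlim : Tendsto (fun x => e x x₀ + e x₀ x) (𝓝 x₀) (𝓝 0) := by
    have := ((he_cont.comp (continuous_id.prodMk (continuous_const (y := x₀)))).tendsto x₀).add
      ((he_cont.comp ((continuous_const (y := x₀)).prodMk continuous_id)).tendsto x₀)
    simpa [Function.comp_def, he_refl] using this
  exact squeeze_zero (fun _ => dist_nonneg) hdist hlim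

end TruncInfDist

lemma MeasurableSet.exists_isCompact_measureReal_sdiff_lt {X : Type*} [TopologicalSpace X]
    [T2Space X] [MeasurableSpace X] [OpensMeasurableSpace X] (μ : Measure X) [IsFiniteMeasure μ]
    [μ.InnerRegularCompactLTTop] {A : Set X} (hA : MeasurableSet A) {ε : ℝ} (hε : 0 < ε) :
    ∃ K ⊆ A, IsCompact K ∧ μ.real (A \ K) < ε := by
  obtain ⟨K, hKA, hK, hμK⟩ :=
    hA.exists_isCompact_sdiff_lt (measure_ne_top μ A) (ENNReal.ofReal_pos.2 hε).ne'
  exact ⟨K, hKA, hK, ENNReal.toReal_lt_of_lt_ofReal hμK⟩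

section Polish

variable {X : Type*} [TopologicalSpace X] [PolishSpace X] [MeasurableSpace X] [BorelSpace X]
  {μ₁ μ₂ : Measure X} [IsProbabilityMeasure μ₁] [IsProbabilityMeasure μ₂]

lemma one_sub_mul_measureReal_sub_le_transportCost {e : X → X → ℝ}
    (he_cont : Continuous fun p : X × X => e p.1 p.2) (he_nonneg : ∀ x y, 0 ≤ e x y)
    (he_refl : ∀ x, e x x = 0) (he_tri : ∀ x y z, e x z ≤ e x y + e y z)
    (he_le_one : ∀ x y, e x y ≤ 1) {K K' : Set X} (hK : MeasurableSet K)
    (hK' : MeasurableSet K') {ε : ℝ} (hε : 0 ≤ ε) (hsep : ∀ x ∈ K, ∀ y ∈ K', 1 - ε ≤ e x y) :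
    (1 - ε) * μ₁.real K - μ₂.real K'ᶜ ≤ transportCost μ₁ μ₂ (fun π => ∫ p, e p.1 p.2 ∂π) := by
  set g := truncInfDist e K'
  have hg_int : ∀ (μ : Measure X) [IsFiniteMeasure μ], Integrable g μ := fun μ _ =>
    integrable_of_nonneg_of_le_one
      (continuous_truncInfDist he_cont he_nonneg he_refl he_tri).measurable
      (truncInfDist_nonneg he_nonneg) (truncInfDist_le_one he_nonneg)
  have hK_le : ∀ x, K.indicator (fun _ => 1 - ε) x ≤ g x := by
    intro x
    by_cases hx : x ∈ K
    · simpa [hx] using one_sub_le_truncInfDist hε (hsep x hx)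
    · simpa [hx] using truncInfDist_nonneg he_nonneg x
  have hK'_ge : ∀ x, g x ≤ K'ᶜ.indicator (fun _ => 1) x := by
    intro x
    by_cases hx : x ∈ K'
    · simp [hx, g, truncInfDist_eq_zero_of_mem he_nonneg he_refl hx]
    · simpa [hx] using truncInfDist_le_one he_nonneg x
  refine le_transportCost fun π h₁ h₂ => ?_
  have := isProbabilityMeasure_of_map_fst h₁
  calc (1 - ε) * μ₁.real K - μ₂.real K'ᶜ ≤ ∫ x, g x ∂μ₁ - ∫ x, g x ∂μ₂ := by
        gcongr ?_ - ?_
        · simpa [integral_indicator_const _ hK, mul_comm] using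
            integral_mono ((integrable_const _).indicator hK) (hg_int μ₁) hK_le
        · simpa [integral_indicator_const _ hK'.compl] using
            integral_mono (hg_int μ₂) ((integrable_const _).indicator hK'.compl) hK'_ge
    _ ≤ ∫ p, e p.1 p.2 ∂π :=
        integral_sub_integral_le_integral_of_coupling h₁ h₂ (hg_int μ₁) (hg_int μ₂)
          (integrable_of_nonneg_of_le_one he_cont.measurable (fun _ => he_nonneg _ _)
            fun _ => he_le_one _ _)
          fun p => sub_le_iff_le_add'.2 (truncInfDist_le_add he_nonneg he_tri p.1 p.2)

theorem eventually_measureReal_sub_sub_le_transportCost (d : ℕ → X → X → ℝ)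
    (hd_cont : ∀ n, Continuous fun p : X × X => d n p.1 p.2)
    (hd_nonneg : ∀ n x y, 0 ≤ d n x y) (hd_refl : ∀ n x, d n x x = 0)
    (hd_tri : ∀ n x y z, d n x z ≤ d n x y + d n y z) (hd_le_one : ∀ n x y, d n x y ≤ 1)
    (hd_mono : ∀ n x y, d n x y ≤ d (n + 1) x y)
    (hd_sep : ∀ x y, x ≠ y → Tendsto (fun n => d n x y) atTop (𝓝 1))
    {A : Set X} (hA : MeasurableSet A) {ε : ℝ} (hε : 0 < ε) :
    ∀ᶠ n in atTop, μ₁.real A - μ₂.real A - 3 * ε ≤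
      transportCost μ₁ μ₂ (fun π => ∫ p, d n p.1 p.2 ∂π) := by
  obtain ⟨K, hKA, hK, hμ₁K⟩ := hA.exists_isCompact_measureReal_sdiff_lt μ₁ hε
  obtain ⟨K', hK'A, hK', hμ₂K'⟩ := hA.compl.exists_isCompact_measureReal_sdiff_lt μ₂ hε
  have hunif : TendstoUniformlyOn (fun n (p : X × X) => d n p.1 p.2) (fun _ => 1) atTop
      (K ×ˢ K') :=
    Monotone.tendstoUniformlyOn_of_forall_tendsto (hK.prod hK')
      (fun n => (hd_cont n).continuousOn)
      (fun p _ => monotone_nat_of_le_succ fun n => hd_mono n p.1 p.2) continuousOn_const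
      fun p hp => hd_sep p.1 p.2 fun h => hK'A hp.2 (h ▸ hKA hp.1)
  filter_upwards [Metric.tendstoUniformlyOn_iff.1 hunif ε hε] with n hn
  have hsep : ∀ x ∈ K, ∀ y ∈ K', 1 - ε ≤ d n x y := fun x hx y hy => by
    have := hn (x, y) ⟨hx, hy⟩
    rw [Real.dist_eq] at this
    linarith [abs_lt.1 this]
  refine le_trans ?_ <| one_sub_mul_measureReal_sub_le_transportCost (hd_cont n) (hd_nonneg n)
    (hd_refl n) (hd_tri n) (hd_le_one n) hK.measurableSet hK'.measurableSet hε.le hsep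
  rw [measureReal_sdiff hKA hK.measurableSet] at hμ₁K
  rw [measureReal_sdiff hK'A hK'.measurableSet, probReal_compl_eq_one_sub hA] at hμ₂K'
  rw [probReal_compl_eq_one_sub hK'.measurableSet]
  nlinarith [mul_nonneg hε.le (sub_nonneg.2 (measureReal_le_one (μ := μ₁) (s := K)))]

end Polish

theorem transport_distances_tendsto_tv_general
    {X : Type*} [MetricSpace X] [TopologicalSpace.SeparableSpace X] [CompleteSpace X]
    [MeasurableSpace X] [BorelSpace X]
    (μ₁ μ₂ : Measure X) [IsProbabilityMeasure μ₁] [IsProbabilityMeasure μ₂]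
    (d : ℕ → X → X → ℝ)
    (hd_cont : ∀ n, Continuous fun p : X × X => d n p.1 p.2)
    (hd_nonneg : ∀ n x y, 0 ≤ d n x y)
    (hd_refl : ∀ n x, d n x x = 0)
    (hd_tri : ∀ n x y z, d n x z ≤ d n x y + d n y z)
    (hd_le_one : ∀ n x y, d n x y ≤ 1)
    (hd_mono : ∀ n x y, d n x y ≤ d (n + 1) x y)
    (hd_sep : ∀ x y, x ≠ y → Tendsto (fun n => d n x y) atTop (nhds 1)) :
    Tendsto
      (fun n => sInf {r : ℝ | ∃ π : Measure (X × X),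
        π.map Prod.fst = μ₁ ∧ π.map Prod.snd = μ₂ ∧
        r = ∫ p, d n p.1 p.2 ∂π})
      atTop
      (nhds (sInf {r : ℝ | ∃ π : Measure (X × X),
        π.map Prod.fst = μ₁ ∧ π.map Prod.snd = μ₂ ∧
        r = (π {p | p.1 ≠ p.2}).toReal})) := by
  have : SecondCountableTopology X := UniformSpace.secondCountable_of_separable X
  obtain ⟨A, hA, hA₁, hA₂⟩ := hahn_decomposition μ₁ μ₂
  have htv := transportCost_measureReal_compl_diagonal hA hA₁ hA₂
  change Tendsto (fun n => transportCost μ₁ μ₂ fun π => ∫ p, d n p.1 p.2 ∂π) atTop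
    (𝓝 (transportCost μ₁ μ₂ fun π => π.real (diagonal X)ᶜ))
  rw [htv]
  refine tendsto_order.2 ⟨fun a ha => ?_, fun b hb => .of_forall fun n => ?_⟩
  · obtain ⟨ε, hε, hεa⟩ : ∃ ε > 0, a < μ₁.real A - μ₂.real A - 3 * ε :=
      ⟨(μ₁.real A - μ₂.real A - a) / 4, by linarith, by linarith⟩
    filter_upwards [eventually_measureReal_sub_sub_le_transportCost (μ₁ := μ₁) (μ₂ := μ₂) d hd_cont
      hd_nonneg hd_refl hd_tri hd_le_one hd_mono hd_sep hA hε] with n hn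
    linarith
  · calc transportCost μ₁ μ₂ (fun π => ∫ p, d n p.1 p.2 ∂π)
        ≤ transportCost μ₁ μ₂ (fun π => π.real (diagonal X)ᶜ) :=
          transportCost_integral_le_measureReal_compl_diagonal (hd_cont n).measurable
            (hd_nonneg n) (hd_refl n) (hd_le_one n)
      _ < b := htv ▸ hb

/-- Corollary 3.5 of Hairer–Mattingly: for a totally separating nondecreasing system
of bounded continuous pseudo-metrics `d_n ≤ 1` with `d_n(x,y) → 1` off the diagonal,
the transport distances `‖μ₁ - μ₂‖_{d_n}` converge to the total variation distance,
realized as the transport distance for the discrete metric `1_{x ≠ y}`. -/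
theorem transport_distances_tendsto_tv
    {X : Type*} [MetricSpace X] [TopologicalSpace.SeparableSpace X] [CompleteSpace X]
    [MeasurableSpace X] [BorelSpace X]
    (μ₁ μ₂ : Measure X) [IsProbabilityMeasure μ₁] [IsProbabilityMeasure μ₂]
    (d : ℕ → X → X → ℝ)
    (hd_cont : ∀ n, Continuous fun p : X × X => d n p.1 p.2)
    (hd_nonneg : ∀ n x y, 0 ≤ d n x y)
    (hd_refl : ∀ n x, d n x x = 0)
    (hd_symm : ∀ n x y, d n x y = d n y x)
    (hd_tri : ∀ n x y z, d n x z ≤ d n x y + d n y z)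
    (hd_le_one : ∀ n x y, d n x y ≤ 1)
    (hd_mono : ∀ n x y, d n x y ≤ d (n + 1) x y)
    (hd_sep : ∀ x y, x ≠ y → Tendsto (fun n => d n x y) atTop (nhds 1)) :
    Tendsto
      (fun n => sInf {r : ℝ | ∃ π : Measure (X × X),
        π.map Prod.fst = μ₁ ∧ π.map Prod.snd = μ₂ ∧
        r = ∫ p, d n p.1 p.2 ∂π})
      atTop
      (nhds (sInf {r : ℝ | ∃ π : Measure (X × X),
        π.map Prod.fst = μ₁ ∧ π.map Prod.snd = μ₂ ∧
        r = (π {p | p.1 ≠ p.2}).toReal})) :=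
  transport_distances_tendsto_tv_general μ₁ μ₂ d hd_cont hd_nonneg hd_refl hd_tri hd_le_one hd_mono
    hd_sep
end
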